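/- arXiv:2309.02755 — 3 statements merged into one kernel-verified Lean document; each statement's English description precedes it below -/
import Mathlib

section
/- Every regular language is generated by a star-controlled GCID system of size (2; 3, 0, 1; 2, 0, 0) whose initial component C1 is also its only final component. -/
/-!
Graph-controlled insertion-deletion (GCID) systems.

Symbols are drawn from the universal symbol set `ℕ`, strings are lists of
symbols.  A GCID system `Π = (k, V, T, A, H, i0, F, R)` has `k` components;
rules `(i, r, j)` move a string from component `i` to component `j`, where
`r` is an insertion rule `(u, η, v)_I` (rewriting `uv → uηv`) or a deletion
rule `(u, δ, v)_D` (rewriting `uδv → uv`), with `u, v ∈ V*` and `η, δ ∈ V⁺`.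
-/

namespace GCIDPaper

/-- Strings over the universal symbol set `ℕ`. -/
abbrev Word : Type := List ℕ

/-- An insertion rule `(u, s, v)_I` (when `isInsertion = true`) or a deletion
rule `(u, s, v)_D` (when `isInsertion = false`), with left context `lctx = u`,
inserted resp. deleted string `core = s`, and right context `rctx = v`. -/
structure InsDelRule : Type where
  isInsertion : Bool
  lctx : Word
  core : Word
  rctx : Word
  deriving DecidableEq

/-- The insertion rule `(u, η, v)_I`. -/
def insRule (u η v : Word) : InsDelRule := ⟨true, u, η, v⟩

/-- The deletion rule `(u, δ, v)_D`. -/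
def delRule (u δ v : Word) : InsDelRule := ⟨false, u, δ, v⟩

/-- Applying a rule to a string: the insertion rule `(u, η, v)_I` corresponds
to the rewriting `uv → uηv`, the deletion rule `(u, δ, v)_D` to `uδv → uv`. -/
def InsDelRule.Applies (r : InsDelRule) (w w' : Word) : Prop :=
  (r.isInsertion = true →
    ∃ x y, w = x ++ r.lctx ++ r.rctx ++ y ∧
      w' = x ++ r.lctx ++ r.core ++ r.rctx ++ y) ∧
  (r.isInsertion = false →
    ∃ x y, w = x ++ r.lctx ++ r.core ++ r.rctx ++ y ∧
      w' = x ++ r.lctx ++ r.rctx ++ y)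

/-- A graph-controlled insertion-deletion system.  The components are
numbered `1, …, k`; `i0` is the initial component, `F` the set of final
components, `axioms` the finite set of axioms (placed in component `i0`),
and `R` the finite set of rules `(i, r, j)`. -/
structure System : Type where
  k : ℕ
  V : Finset ℕ
  T : Finset ℕ
  axioms : Finset Word
  i0 : ℕ
  F : Finset ℕ
  R : Finset (ℕ × InsDelRule × ℕ)
  k_pos : 1 ≤ k
  T_sub_V : T ⊆ V
  axioms_over_V : ∀ w ∈ axioms, ∀ a ∈ w, a ∈ V
  i0_mem : i0 ∈ Finset.Icc 1 k
  F_sub : F ⊆ Finset.Icc 1 k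
  R_wf : ∀ q ∈ R, q.1 ∈ Finset.Icc 1 k ∧ q.2.2 ∈ Finset.Icc 1 k ∧
    q.2.1.core ≠ [] ∧ (∀ a ∈ q.2.1.lctx, a ∈ V) ∧
    (∀ a ∈ q.2.1.core, a ∈ V) ∧ (∀ a ∈ q.2.1.rctx, a ∈ V)

/-- One derivation step between configurations: `(w)_i ⇒ (w')_j` if some rule
`(i, r, j)` of the system applied to `w` yields `w'`. -/
def Step (S : System) (c c' : Word × ℕ) : Prop :=
  ∃ q ∈ S.R, q.1 = c.2 ∧ q.2.2 = c'.2 ∧ q.2.1.Applies c.1 c'.1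

/-- The reflexive-transitive closure `⇒*` of the step relation. -/
def Derives (S : System) : Word × ℕ → Word × ℕ → Prop :=
  Relation.ReflTransGen (Step S)

/-- The language generated:
`L(Π) = { w ∈ T* : (x)_{i0} ⇒* (w)_{i_f} for some axiom x and some i_f ∈ F }`. -/
def language (S : System) : Set Word :=
  { w | (∀ a ∈ w, a ∈ S.T) ∧
    ∃ x ∈ S.axioms, ∃ f ∈ S.F, Derives S (x, S.i0) (w, f) }

/-- A single rule obeys the size bounds `(n, i', i''; m, j', j'')`. -/
def InsDelRule.SizeLE (r : InsDelRule) (n i' i'' m j' j'' : ℕ) : Prop :=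
  (r.isInsertion = true →
    r.core.length ≤ n ∧ r.lctx.length ≤ i' ∧ r.rctx.length ≤ i'') ∧
  (r.isInsertion = false →
    r.core.length ≤ m ∧ r.lctx.length ≤ j' ∧ r.rctx.length ≤ j'')

/-- The system has size `(k; n, i', i''; m, j', j'')`. -/
def HasSize (S : System) (k n i' i'' m j' j'' : ℕ) : Prop :=
  S.k = k ∧ ∀ q ∈ S.R, q.2.1.SizeLE n i' i'' m j' j''

/-- Star-controlled: the underlying undirected control graph (with an edge
`{Ci, Cj}` whenever there is a rule `(i, r, j)`) has exactly the edge set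
`{ {C1, Ci} : 2 ≤ i ≤ k }`; in particular there are no loops. -/
def StarControlled (S : System) : Prop :=
  (∀ q ∈ S.R, ∃ i ∈ Finset.Icc 2 S.k, ({q.1, q.2.2} : Finset ℕ) = {1, i}) ∧
  (∀ i ∈ Finset.Icc 2 S.k, ∃ q ∈ S.R, ({q.1, q.2.2} : Finset ℕ) = {1, i})

/-- The class `GCID(k; n, i', i''; m, j', j'')` of languages generated by GCID
systems of the given size. -/
def GCIDClass (k n i' i'' m j' j'' : ℕ) : Set (Set Word) :=
  { L | ∃ S : System, HasSize S k n i' i'' m j' j'' ∧ language S = L }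

/-- The class `GCID_S(k; n, i', i''; m, j', j'')` of languages generated by
star-controlled GCID systems of the given size. -/
def GCID_S (k n i' i'' m j' j'' : ℕ) : Set (Set Word) :=
  { L | ∃ S : System, StarControlled S ∧ HasSize S k n i' i'' m j' j'' ∧
    language S = L }

/-!
Read a DFA `M` for the language as a right-linear grammar with one nonterminal `A_s` per
state `s`; the string `y A_{M.eval y}` in the central component `C1` is a sentential form.
A grammar rule `A_s → a A_t` is simulated by inserting `a A_t ℓ` to the left of `A_s` while
moving to `C2`, then deleting the pair `ℓ A_s` on the way back; the rule `A_s → λ` works the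
same way with `ℓ` alone inserted. All auxiliary symbols lie outside `T`, a string in `C1`
carries at most one of them (at its end) and a string in `C2` exactly one label, so an
insertion can only happen in front of the final `A_s`, and a deletion can only undo the
insertion just made.
-/

theorem append_cons_inj_of_notMem {α : Type*} {x z u v : List α} {c d : α}
    (h : x ++ d :: z = u ++ c :: v) (hu : d ∉ u) (hv : d ∉ v) : x = u ∧ d = c ∧ z = v := by
  induction u generalizing x with
  | nil =>
    cases x with
    | nil => simpa using h
    | cons b x =>
      simp only [List.cons_append, List.nil_append, List.cons.injEq] at h
      exact absurd (h.2 ▸ by simp) hv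
  | cons b u ih =>
    cases x with
    | nil =>
      simp only [List.nil_append, List.cons_append, List.cons.injEq] at h
      exact absurd (h.1 ▸ List.mem_cons_self ..) hu
    | cons a x =>
      simp only [List.cons_append, List.cons.injEq] at h
      obtain ⟨rfl, h⟩ := h
      obtain ⟨rfl, hdc, rfl⟩ := ih h fun hd => hu (List.mem_cons_of_mem _ hd)
      exact ⟨rfl, hdc, rfl⟩

section Rules

variable {u η v w w' : Word} {n i' i'' m j' j'' : ℕ}

@[simp]
theorem applies_insRule : (insRule u η v).Applies w w' ↔
    ∃ x y, w = x ++ u ++ v ++ y ∧ w' = x ++ u ++ η ++ v ++ y := by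
  simp [InsDelRule.Applies, insRule]

@[simp]
theorem applies_delRule : (delRule u η v).Applies w w' ↔
    ∃ x y, w = x ++ u ++ η ++ v ++ y ∧ w' = x ++ u ++ v ++ y := by
  simp [InsDelRule.Applies, delRule]

@[simp]
theorem sizeLE_insRule : (insRule u η v).SizeLE n i' i'' m j' j'' ↔
    η.length ≤ n ∧ u.length ≤ i' ∧ v.length ≤ i'' := by
  simp [InsDelRule.SizeLE, insRule]

@[simp]
theorem sizeLE_delRule : (delRule u η v).SizeLE n i' i'' m j' j'' ↔
    η.length ≤ m ∧ u.length ≤ j' ∧ v.length ≤ j'' := by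
  simp [InsDelRule.SizeLE, delRule]

end Rules

def System.ofRules (k : ℕ) (T : Finset ℕ) (axioms : Finset Word) (i0 : ℕ) (F : Finset ℕ)
    (R : Finset (ℕ × InsDelRule × ℕ)) (hk : 1 ≤ k) (hi0 : i0 ∈ Finset.Icc 1 k)
    (hF : F ⊆ Finset.Icc 1 k)
    (hR : ∀ q ∈ R, q.1 ∈ Finset.Icc 1 k ∧ q.2.2 ∈ Finset.Icc 1 k ∧ q.2.1.core ≠ []) :
    System where
  k := k
  V := T ∪ axioms.biUnion List.toFinset ∪
    R.biUnion fun q => (q.2.1.lctx ++ q.2.1.core ++ q.2.1.rctx).toFinset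
  T := T
  axioms := axioms
  i0 := i0
  F := F
  R := R
  k_pos := hk
  T_sub_V := fun a ha => by simp [ha]
  axioms_over_V w hw a ha := by
    simp only [Finset.mem_union, Finset.mem_biUnion, List.mem_toFinset]
    exact Or.inl (Or.inr ⟨w, hw, ha⟩)
  i0_mem := hi0
  F_sub := hF
  R_wf q hq := by
    refine ⟨(hR q hq).1, (hR q hq).2.1, (hR q hq).2.2, ?_, ?_, ?_⟩ <;>
    · intro a ha
      simp only [Finset.mem_union, Finset.mem_biUnion, List.mem_toFinset, List.mem_append]
      exact Or.inr ⟨q, hq, by simp [ha]⟩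

theorem starControlled_of_k_eq_two {S : System} (hk : S.k = 2)
    (hR : ∀ q ∈ S.R, ({q.1, q.2.2} : Finset ℕ) = {1, 2}) (hne : S.R.Nonempty) :
    StarControlled S := by
  have hIcc : Finset.Icc 2 S.k = {2} := by rw [hk]; rfl
  rw [StarControlled, hIcc]
  refine ⟨fun q hq => ⟨2, Finset.mem_singleton_self _, hR q hq⟩, fun i hi => ?_⟩
  obtain ⟨q, hq⟩ := hne
  exact ⟨q, hq, Finset.mem_singleton.mp hi ▸ hR q hq⟩

section DFASimulation

variable {σ : Type} (T : Finset ℕ) (M : DFA ℕ σ)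

def Enabled (s : σ) : Option ℕ → Prop
  | none => s ∈ M.accept
  | some a => a ∈ T

variable {T M} in
theorem Enabled.mem_insertNone {s : σ} {o : Option ℕ} (h : Enabled T M s o) :
    o ∈ T.insertNone := by
  cases o with
  | none => exact Finset.mem_insertNone.2 (by simp)
  | some a => exact Finset.mem_insertNone.2 (by simpa [Enabled] using h)

variable [Encodable σ]

/-- Auxiliary symbols, placed above every symbol of `T`: `inl s` is the nonterminal `A_s`, and
`inr (s, o)` labels the grammar rule `A_s → a A_{δ(s,a)}` when `o = some a`, `A_s → λ` when
`o = none`. -/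
def sym (m : σ ⊕ σ × Option ℕ) : ℕ := T.sup id + 1 + Encodable.encode m

def nt (s : σ) : ℕ := sym T (.inl s)

def lab (s : σ) (o : Option ℕ) : ℕ := sym T (.inr (s, o))

variable {T}

theorem sym_injective : Function.Injective (sym (σ := σ) T) := fun _ _ h =>
  Encodable.encode_injective (Nat.add_left_cancel h)

theorem sym_notMem (m : σ ⊕ σ × Option ℕ) : sym T m ∉ T := fun h => by
  have := Finset.le_sup (f := id) h
  simp only [id, sym] at this
  omega

theorem sym_notMem_of_subset {y : Word} (hy : ∀ a ∈ y, a ∈ T) (m : σ ⊕ σ × Option ℕ) :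
    sym T m ∉ y := fun h => sym_notMem m (hy _ h)

theorem nt_injective : Function.Injective (nt (σ := σ) T) := fun _ _ h => by
  simpa using sym_injective h

theorem lab_ne_nt (s t : σ) (o : Option ℕ) : lab T s o ≠ nt T t := by
  simp [lab, nt, sym_injective.eq_iff]

variable (T)

def body (s : σ) : Option ℕ → Word
  | none => []
  | some a => [a, nt T (M.step s a)]

variable {T M}

theorem lab_notMem_body {s t : σ} {o p : Option ℕ} (h : Enabled T M s o) :
    lab T t p ∉ body T M s o := by
  cases o with
  | none => simp [body]
  | some a =>
    simp only [body, List.mem_cons, List.not_mem_nil, or_false, not_or]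
    exact ⟨fun ha => sym_notMem _ (ha ▸ h), lab_ne_nt _ _ _⟩

variable (T M)

def insertionRule (s : σ) (o : Option ℕ) : ℕ × InsDelRule × ℕ :=
  (1, insRule [] (body T M s o ++ [lab T s o]) [nt T s], 2)

def deletionRule (s : σ) (o : Option ℕ) : ℕ × InsDelRule × ℕ :=
  (2, delRule [] [lab T s o, nt T s] [], 1)

inductive Invariant : Word × ℕ → Prop
  | pending (y : Word) (hy : ∀ a ∈ y, a ∈ T) : Invariant (y ++ [nt T (M.eval y)], 1)
  | accepted (y : Word) (hy : ∀ a ∈ y, a ∈ T) (hacc : M.eval y ∈ M.accept) : Invariant (y, 1)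
  | marked (y : Word) (hy : ∀ a ∈ y, a ∈ T) (o : Option ℕ) (ho : Enabled T M (M.eval y) o) :
      Invariant (y ++ body T M (M.eval y) o ++ [lab T (M.eval y) o, nt T (M.eval y)], 2)

variable {T M}

theorem Invariant.insert {x z : Word} {s : σ} {o : Option ℕ}
    (hc : Invariant T M (x ++ [nt T s] ++ z, 1)) (ho : Enabled T M s o) :
    Invariant T M (x ++ (body T M s o ++ [lab T s o]) ++ [nt T s] ++ z, 2) := by
  generalize hw : x ++ [nt T s] ++ z = w at hc
  cases hc with
  | pending y hy =>
    obtain ⟨rfl, hs, rfl⟩ := append_cons_inj_of_notMem (d := nt T s) (by simpa using hw)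
      (sym_notMem_of_subset hy _) List.not_mem_nil
    obtain rfl := nt_injective hs
    simpa using Invariant.marked x hy o ho
  | accepted _ hy _ =>
    exact (sym_notMem_of_subset hy (.inl s) (show nt T s ∈ _ by rw [← hw]; simp)).elim

theorem Invariant.delete {x z : Word} {t : σ} {p : Option ℕ}
    (hc : Invariant T M (x ++ [lab T t p, nt T t] ++ z, 2)) : Invariant T M (x ++ z, 1) := by
  generalize hw : x ++ [lab T t p, nt T t] ++ z = w at hc
  cases hc with
  | marked y hy o ho =>
    have hw' : x ++ lab T t p :: (nt T t :: z) =
        (y ++ body T M (M.eval y) o) ++ lab T (M.eval y) o :: [nt T (M.eval y)] := by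
      simpa using hw
    obtain ⟨rfl, -, hz⟩ := append_cons_inj_of_notMem hw'
      (by simpa [not_or] using ⟨sym_notMem_of_subset hy _, lab_notMem_body ho⟩)
      (by simpa using lab_ne_nt _ _ _)
    obtain ⟨-, rfl⟩ := List.cons.inj hz
    cases o with
    | none => simpa [body] using Invariant.accepted y hy ho
    | some a =>
      have hya : ∀ b ∈ y ++ [a], b ∈ T := by simpa [or_imp, forall_and] using ⟨hy, ho⟩
      simpa [body, DFA.eval_append_singleton] using Invariant.pending (y ++ [a]) hya

theorem Invariant.accept {w : Word} (h : Invariant T M (w, 1)) (hw : ∀ a ∈ w, a ∈ T) :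
    M.eval w ∈ M.accept := by
  generalize hc : (w, 1) = c at h
  cases h with
  | pending y _ =>
    cases hc
    exact (sym_notMem (.inl (M.eval y)) (hw _ (by simp [nt]))).elim
  | accepted _ _ hacc => cases hc; exact hacc
  | marked => cases hc

section Simulator

variable [Fintype σ]

variable (T M)

open scoped Classical in
noncomputable def rules : Finset (ℕ × InsDelRule × ℕ) :=
  (((Finset.univ : Finset σ) ×ˢ T.insertNone).filter fun p => Enabled T M p.1 p.2).image
      (fun p => insertionRule T M p.1 p.2) ∪
    ((Finset.univ : Finset σ) ×ˢ T.insertNone).image fun p => deletionRule T p.1 p.2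

variable {T M}

theorem mem_rules {q : ℕ × InsDelRule × ℕ} : q ∈ rules T M ↔
    (∃ s o, Enabled T M s o ∧ q = insertionRule T M s o) ∨
      ∃ s : σ, ∃ o ∈ T.insertNone, q = deletionRule T s o := by
  simp only [rules, Finset.mem_union, Finset.mem_image, Finset.mem_filter, Finset.mem_product,
    Finset.mem_univ, true_and, Prod.exists]
  constructor
  · rintro (⟨s, o, ⟨-, ho⟩, rfl⟩ | ⟨s, o, ho, rfl⟩)
    exacts [Or.inl ⟨s, o, ho, rfl⟩, Or.inr ⟨s, o, ho, rfl⟩]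
  · rintro (⟨s, o, ho, rfl⟩ | ⟨s, o, ho, rfl⟩)
    exacts [Or.inl ⟨s, o, ⟨ho.mem_insertNone, ho⟩, rfl⟩, Or.inr ⟨s, o, ho, rfl⟩]

theorem endpoints_of_mem_rules {q : ℕ × InsDelRule × ℕ} (hq : q ∈ rules T M) :
    q.1 = 1 ∧ q.2.2 = 2 ∨ q.1 = 2 ∧ q.2.2 = 1 := by
  rcases mem_rules.1 hq with ⟨s, o, -, rfl⟩ | ⟨s, o, -, rfl⟩
  exacts [Or.inl ⟨rfl, rfl⟩, Or.inr ⟨rfl, rfl⟩]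

variable (T M)

noncomputable def simulator : System :=
  System.ofRules 2 T {[nt T M.start]} 1 {1} (rules T M) (by norm_num) (by decide) (by decide)
    fun q hq => by
      refine ⟨?_, ?_, ?_⟩
      · rcases endpoints_of_mem_rules hq with ⟨h, -⟩ | ⟨h, -⟩ <;> simp [h]
      · rcases endpoints_of_mem_rules hq with ⟨-, h⟩ | ⟨-, h⟩ <;> simp [h]
      · rcases mem_rules.1 hq with ⟨s, o, -, rfl⟩ | ⟨s, o, -, rfl⟩ <;>
          simp [insertionRule, deletionRule, insRule, delRule]

theorem starControlled_simulator : StarControlled (simulator T M) := by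
  refine starControlled_of_k_eq_two rfl (fun q hq => ?_) ⟨deletionRule T M.start none, ?_⟩
  · rcases endpoints_of_mem_rules hq with ⟨h1, h2⟩ | ⟨h1, h2⟩
    · rw [h1, h2]
    · rw [h1, h2, Finset.pair_comm]
  · exact mem_rules.2 (Or.inr ⟨M.start, none, Finset.mem_insertNone.2 (by simp), rfl⟩)

theorem hasSize_simulator : HasSize (simulator T M) 2 3 0 1 2 0 0 := by
  refine ⟨rfl, fun q hq => ?_⟩
  rcases mem_rules.1 hq with ⟨s, o, -, rfl⟩ | ⟨s, o, -, rfl⟩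
  · cases o <;> simp [insertionRule, body]
  · simp [deletionRule]

variable {T M}

theorem Invariant.step {c c' : Word × ℕ} (h : Step (simulator T M) c c')
    (hc : Invariant T M c) : Invariant T M c' := by
  obtain ⟨q, hq, h1, h2, happ⟩ := h
  obtain ⟨w, i⟩ := c
  obtain ⟨w', j⟩ := c'
  rcases mem_rules.1 hq with ⟨s, o, ho, rfl⟩ | ⟨s, o, -, rfl⟩
  · simp only [insertionRule, applies_insRule, List.append_nil] at happ h1 h2
    obtain ⟨x, z, rfl, rfl⟩ := happ
    subst h1 h2
    exact hc.insert ho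
  · simp only [deletionRule, applies_delRule, List.append_nil] at happ h1 h2
    obtain ⟨x, z, rfl, rfl⟩ := happ
    subst h1 h2
    exact hc.delete

theorem Invariant.of_derives {c : Word × ℕ}
    (h : Derives (simulator T M) ([nt T M.start], 1) c) : Invariant T M c := by
  induction h with
  | refl => simpa using Invariant.pending (M := M) [] (by simp)
  | tail _ hstep ih => exact ih.step hstep

theorem derives_body (x : Word) {s : σ} {o : Option ℕ} (ho : Enabled T M s o) :
    Derives (simulator T M) (x ++ [nt T s], 1) (x ++ body T M s o, 1) := by
  have hins : Step (simulator T M) (x ++ [nt T s], 1)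
      (x ++ body T M s o ++ [lab T s o, nt T s], 2) :=
    ⟨insertionRule T M s o, mem_rules.2 (Or.inl ⟨s, o, ho, rfl⟩), rfl, rfl,
      by simpa [insertionRule] using ⟨x, [], by simp, by simp⟩⟩
  have hdel : Step (simulator T M) (x ++ body T M s o ++ [lab T s o, nt T s], 2)
      (x ++ body T M s o, 1) :=
    ⟨deletionRule T s o, mem_rules.2 (Or.inr ⟨s, o, ho.mem_insertNone, rfl⟩), rfl, rfl,
      by simpa [deletionRule] using ⟨x ++ body T M s o, [], by simp, by simp⟩⟩
  exact (Relation.ReflTransGen.single hins).tail hdel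

theorem derives_prefix (y : Word) (hy : ∀ a ∈ y, a ∈ T) :
    Derives (simulator T M) ([nt T M.start], 1) (y ++ [nt T (M.eval y)], 1) := by
  induction y using List.reverseRecOn with
  | nil =>
    rw [List.nil_append, DFA.eval_nil]
    exact Relation.ReflTransGen.refl
  | append_singleton y a ih =>
    have hya : (∀ b ∈ y, b ∈ T) ∧ a ∈ T := by simpa [or_imp, forall_and] using hy
    have : Derives (simulator T M) _ _ :=
      (ih hya.1).trans (derives_body (M := M) y (o := some a) hya.2)
    simpa [body, DFA.eval_append_singleton] using this

theorem language_simulator :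
    language (simulator T M) = {w | (∀ a ∈ w, a ∈ T) ∧ w ∈ M.accepts} := by
  ext w
  change ((∀ a ∈ w, a ∈ T) ∧ ∃ x ∈ ({[nt T M.start]} : Finset Word), ∃ f ∈ ({1} : Finset ℕ),
    Derives (simulator T M) (x, 1) (w, f)) ↔ (∀ a ∈ w, a ∈ T) ∧ M.eval w ∈ M.accept
  simp only [Finset.mem_singleton, exists_eq_left]
  refine and_congr_right fun hw => ⟨fun hder => (Invariant.of_derives hder).accept hw, ?_⟩
  intro hacc
  have h := (derives_prefix w hw).trans (derives_body (M := M) w (o := none) hacc)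
  rwa [body, List.append_nil] at h

end Simulator

end DFASimulation

/-- Every regular language (over a finite alphabet) is generated by a
star-controlled GCID system of size `(2; 3, 0, 1; 2, 0, 0)` whose initial
component `C1` is also its only final component. -/
theorem regular_subset_gcid_s_2_301_200
    (L : Set Word) (hreg : Language.IsRegular (L : Language ℕ))
    (T : Finset ℕ) (hT : ∀ w ∈ L, ∀ a ∈ w, a ∈ T) :
    ∃ S : System, StarControlled S ∧ HasSize S 2 3 0 1 2 0 0 ∧
      S.i0 = 1 ∧ S.F = {1} ∧ language S = L := by
  obtain ⟨σ, _, M, hM⟩ := hreg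
  let := Fintype.toEncodable σ
  refine ⟨simulator T M, starControlled_simulator T M, hasSize_simulator T M, rfl, rfl, ?_⟩
  rw [language_simulator, hM]
  ext w
  exact ⟨And.right, fun hw => ⟨hT w hw, hw⟩⟩

end GCIDPaper
end

section
/- Let G = (N, T, P, S) be a type-0 grammar in Special Geffert Normal Form. Every sentential form derivable from S in G belongs to {A, C}* (N' ∪ {λ}) ({B, D} ∪ T)*; in particular, every derivable sentential form contains at most one occurrence of a nonterminal from N', and if such a nonterminal is present it separates all occurrences of A and C (which lie to its left) from all occurrences of B, D and terminal symbols (which lie to its right). -/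
/-!
Type-0 grammars in Special Geffert Normal Form (SGNF).

Symbols are drawn from the universal symbol set `ℕ`; strings (sentential
forms) are lists of symbols; `λ` is the empty string `[]`.
-/

namespace SGNFPaper

/-- Strings over the universal symbol set `ℕ`. -/
abbrev Word : Type := List ℕ

/-- A type-0 grammar `G = (N, T, P, S)` in Special Geffert Normal Form:
the nonterminal alphabet decomposes as `N = N' ∪ N''` with
`N'' = {A, B, C, D}` (four distinct nonterminals, disjoint from `N'`),
`N'` contains at least `S` and `S'`, nonterminals and terminals are disjoint,
the only non-context-free rules are `AB → λ` and `CD → λ`, and every other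
rule is either `S' → λ` or of the form `X → Y₁Y₂` with `X ∈ N' ∖ {S'}` and
`Y₁Y₂ ∈ ((N' ∖ {X})(T ∪ {B, D})) ∪ ({A, C}(N' ∖ {X}))`. -/
structure Grammar : Type where
  /-- The nonterminal set `N'`. -/
  N' : Finset ℕ
  /-- The terminal alphabet `T`. -/
  T : Finset ℕ
  /-- The four nonterminals of `N'' = {A, B, C, D}`. -/
  A : ℕ
  B : ℕ
  C : ℕ
  D : ℕ
  /-- The start symbol `S`. -/
  S : ℕ
  /-- The distinguished nonterminal `S'`. -/
  S' : ℕ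
  /-- The finite set of production rules, a rule `α → β` being the pair `(α, β)`. -/
  P : Finset (Word × Word)
  S_mem : S ∈ N'
  S'_mem : S' ∈ N'
  ABCD_distinct : A ≠ B ∧ A ≠ C ∧ A ≠ D ∧ B ≠ C ∧ B ≠ D ∧ C ≠ D
  ABCD_not_N' : A ∉ N' ∧ B ∉ N' ∧ C ∉ N' ∧ D ∉ N'
  N_T_disjoint : ∀ a ∈ N' ∪ {A, B, C, D}, a ∉ T
  AB_rule : ([A, B], ([] : Word)) ∈ P
  CD_rule : ([C, D], ([] : Word)) ∈ P
  rules_form : ∀ r ∈ P,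
    r = ([A, B], ([] : Word)) ∨ r = ([C, D], ([] : Word)) ∨
    r = ([S'], ([] : Word)) ∨
    ∃ X Y₁ Y₂ : ℕ, r = ([X], [Y₁, Y₂]) ∧ X ∈ N' ∧ X ≠ S' ∧
      ((Y₁ ∈ N' ∧ Y₁ ≠ X ∧ (Y₂ ∈ T ∨ Y₂ = B ∨ Y₂ = D)) ∨
       ((Y₁ = A ∨ Y₁ = C) ∧ Y₂ ∈ N' ∧ Y₂ ≠ X))

/-- One derivation step: applying a rule `α → β` of `G` to `uαv` yields `uβv`. -/
def Produces (G : Grammar) (w w' : Word) : Prop :=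
  ∃ r ∈ G.P, ∃ x y : Word, w = x ++ r.1 ++ y ∧ w' = x ++ r.2 ++ y

/-- The derivation relation `⇒*` of `G` (reflexive-transitive closure). -/
def Derives (G : Grammar) : Word → Word → Prop :=
  Relation.ReflTransGen (Produces G)

/-!
A word lies in `{A, C}* (N' ∪ {λ}) ({B, D} ∪ T)*` as soon as each of its symbols is left (`A`, `C`),
in `N'`, or right (`B`, `D`, `T`), and of any two symbols the earlier one is left or the later one is
right. This invariant holds for `[S]`, it passes to subwords, which covers the erasing rules
`AB → λ`, `CD → λ`, `S' → λ`, and a symbol of `N'` may be replaced by any word satisfying it, which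
covers the rules `X → Y₁Y₂`.
-/

section PairwiseOr

variable {α : Type*} {L R : α → Prop}

theorem exists_append_of_pairwise_or {w : List α} (hLR : ∀ a ∈ w, L a ∨ R a)
    (hw : w.Pairwise (fun a b => L a ∨ R b)) :
    ∃ u v, w = u ++ v ∧ (∀ a ∈ u, L a) ∧ ∀ b ∈ v, R b := by
  induction w with
  | nil => exact ⟨[], [], rfl, by simp, by simp⟩
  | cons c w ih =>
    rw [List.pairwise_cons] at hw
    by_cases hc : L c
    · obtain ⟨u, v, rfl, hu, hv⟩ := ih (fun a ha => hLR a (by simp [ha])) hw.2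
      exact ⟨c :: u, v, rfl, by simpa [hc] using hu, hv⟩
    · have hcR : R c := (hLR c (by simp)).resolve_left hc
      refine ⟨[], c :: w, rfl, by simp, ?_⟩
      simpa [hcR] using fun b hb => (hw.1 b hb).resolve_left hc

theorem forall_of_pairwise_or_append_cons {x y : List α} {c : α}
    (hw : (x ++ c :: y).Pairwise (fun a b => L a ∨ R b)) (hL : ¬ L c) (hR : ¬ R c) :
    (∀ a ∈ x, L a) ∧ ∀ b ∈ y, R b := by
  simp only [List.pairwise_append, List.pairwise_cons, List.mem_cons] at hw
  exact ⟨fun a ha => (hw.2.2 a ha c (Or.inl rfl)).resolve_right hR,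
    fun b hb => (hw.2.1.1 b hb).resolve_left hL⟩

theorem pairwise_or_append_append {x m y : List α} (hx : ∀ a ∈ x, L a) (hy : ∀ b ∈ y, R b)
    (hm : m.Pairwise (fun a b => L a ∨ R b)) :
    (x ++ m ++ y).Pairwise (fun a b => L a ∨ R b) := by
  simp only [List.pairwise_append, List.mem_append]
  refine ⟨⟨List.pairwise_of_forall_mem_list fun a ha _ _ => Or.inl (hx a ha), hm,
    fun a ha _ _ => Or.inl (hx a ha)⟩,
    List.pairwise_of_forall_mem_list fun _ _ b hb => Or.inr (hy b hb),
    fun _ _ b hb => Or.inr (hy b hb)⟩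

end PairwiseOr

def IsLeft (G : Grammar) (a : ℕ) : Prop := a = G.A ∨ a = G.C

def IsRight (G : Grammar) (b : ℕ) : Prop := b = G.B ∨ b = G.D ∨ b ∈ G.T

def WellShaped (G : Grammar) (w : Word) : Prop :=
  (∀ a ∈ w, IsLeft G a ∨ a ∈ G.N' ∨ IsRight G a) ∧
    w.Pairwise (fun a b => IsLeft G a ∨ IsRight G b)

variable {G : Grammar}

theorem not_isLeft_of_mem_N' {X : ℕ} (hX : X ∈ G.N') : ¬ IsLeft G X := by
  rintro (rfl | rfl)
  exacts [G.ABCD_not_N'.1 hX, G.ABCD_not_N'.2.2.1 hX]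

theorem not_isRight_of_mem_N' {X : ℕ} (hX : X ∈ G.N') : ¬ IsRight G X := by
  rintro (rfl | rfl | hT)
  exacts [G.ABCD_not_N'.2.1 hX, G.ABCD_not_N'.2.2.2 hX, G.N_T_disjoint X (by simp [hX]) hT]

theorem wellShaped_singleton {X : ℕ} (hX : X ∈ G.N') : WellShaped G [X] := by
  simp [WellShaped, hX]

theorem WellShaped.sublist {w w' : Word} (hw : WellShaped G w) (h : w'.Sublist w) :
    WellShaped G w' :=
  ⟨fun a ha => hw.1 a (h.subset ha), hw.2.sublist h⟩

theorem WellShaped.replace {x y m : Word} {X : ℕ} (hw : WellShaped G (x ++ [X] ++ y))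
    (hX : X ∈ G.N') (hm : WellShaped G m) : WellShaped G (x ++ m ++ y) := by
  obtain ⟨hx, hy⟩ := forall_of_pairwise_or_append_cons (by simpa using hw.2)
    (not_isLeft_of_mem_N' hX) (not_isRight_of_mem_N' hX)
  refine ⟨fun a ha => ?_, pairwise_or_append_append hx hy hm.2⟩
  rcases List.mem_append.1 ha with ha | ha
  · rcases List.mem_append.1 ha with ha | ha
    exacts [Or.inl (hx a ha), hm.1 a ha]
  · exact Or.inr (Or.inr (hy a ha))

theorem wellShaped_of_rules_form {X Y₁ Y₂ : ℕ}
    (h : (Y₁ ∈ G.N' ∧ Y₁ ≠ X ∧ (Y₂ ∈ G.T ∨ Y₂ = G.B ∨ Y₂ = G.D)) ∨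
      ((Y₁ = G.A ∨ Y₁ = G.C) ∧ Y₂ ∈ G.N' ∧ Y₂ ≠ X)) :
    WellShaped G [Y₁, Y₂] := by
  rcases h with ⟨hY₁, -, hY₂⟩ | ⟨hY₁, hY₂, -⟩
  · have hR : IsRight G Y₂ := by unfold IsRight; tauto
    simp [WellShaped, hY₁, hR]
  · simp [WellShaped, IsLeft, hY₁, hY₂]

theorem WellShaped.of_produces {w w' : Word} (hw : WellShaped G w) (h : Produces G w w') :
    WellShaped G w' := by
  obtain ⟨r, hr, x, y, rfl, rfl⟩ := h
  have erase {u : Word} (hu : WellShaped G (x ++ u ++ y)) : WellShaped G (x ++ [] ++ y) :=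
    hu.sublist (by simp)
  rcases G.rules_form r hr with rfl | rfl | rfl | ⟨X, Y₁, Y₂, rfl, hX, -, hY⟩
  · exact erase hw
  · exact erase hw
  · exact erase hw
  · exact hw.replace hX (wellShaped_of_rules_form hY)

theorem wellShaped_of_derives {w : Word} (h : Derives G [G.S] w) : WellShaped G w := by
  induction h with
  | refl => exact wellShaped_singleton G.S_mem
  | tail _ hp ih => exact ih.of_produces hp

theorem WellShaped.exists_split {w : Word} (hw : WellShaped G w) :
    ∃ α β : Word, (∀ a ∈ α, IsLeft G a) ∧ (∀ b ∈ β, IsRight G b) ∧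
      (w = α ++ β ∨ ∃ X ∈ G.N', w = α ++ [X] ++ β) := by
  by_cases hN : ∃ X ∈ w, X ∈ G.N'
  · obtain ⟨X, hXw, hX⟩ := hN
    obtain ⟨x, y, rfl⟩ := List.append_of_mem hXw
    obtain ⟨hx, hy⟩ := forall_of_pairwise_or_append_cons hw.2
      (not_isLeft_of_mem_N' hX) (not_isRight_of_mem_N' hX)
    exact ⟨x, y, hx, hy, Or.inr ⟨X, hX, by simp⟩⟩
  · obtain ⟨u, v, rfl, hu, hv⟩ := exists_append_of_pairwise_or
      (fun a ha => (hw.1 a ha).imp_right fun h => h.resolve_left fun hX => hN ⟨a, ha, hX⟩) hw.2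
    exact ⟨u, v, hu, hv, Or.inl rfl⟩

theorem countP_mem_N'_append_append_le {α m β : Word} (hα : ∀ a ∈ α, IsLeft G a)
    (hβ : ∀ b ∈ β, IsRight G b) :
    (α ++ m ++ β).countP (fun a => decide (a ∈ G.N')) ≤ m.length := by
  have hα0 : α.countP (fun a => decide (a ∈ G.N')) = 0 :=
    List.countP_eq_zero.2 fun a ha hN => not_isLeft_of_mem_N' (of_decide_eq_true hN) (hα a ha)
  have hβ0 : β.countP (fun a => decide (a ∈ G.N')) = 0 :=
    List.countP_eq_zero.2 fun b hb hN => not_isRight_of_mem_N' (of_decide_eq_true hN) (hβ b hb)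
  simpa [List.countP_append, hα0, hβ0] using List.countP_le_length

/-- Every sentential form derivable from `S` in a grammar in Special Geffert
Normal Form belongs to `{A, C}* (N' ∪ {λ}) ({B, D} ∪ T)*`: it splits as
`α ++ β` or `α ++ [X] ++ β` with `α` a string over `{A, C}`, `β` a string over
`{B, D} ∪ T`, and `X ∈ N'`; in particular it contains at most one occurrence
of a nonterminal from `N'`, and if such a nonterminal is present it separates
all occurrences of `A` and `C` (to its left) from all occurrences of `B`, `D`
and terminal symbols (to its right). -/
theorem sentential_form_shape (G : Grammar) (w : Word)
    (h : Derives G [G.S] w) :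
    (∃ α β : Word, (∀ a ∈ α, a = G.A ∨ a = G.C) ∧
      (∀ b ∈ β, b = G.B ∨ b = G.D ∨ b ∈ G.T) ∧
      (w = α ++ β ∨ ∃ X ∈ G.N', w = α ++ [X] ++ β)) ∧
    w.countP (fun a => decide (a ∈ G.N')) ≤ 1 := by
  obtain ⟨α, β, hα, hβ, hsplit⟩ := (wellShaped_of_derives h).exists_split
  refine ⟨⟨α, β, hα, hβ, hsplit⟩, ?_⟩
  rcases hsplit with rfl | ⟨X, -, rfl⟩
  · have h0 := countP_mem_N'_append_append_le (m := []) hα hβ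
    rw [List.append_nil, List.length_nil] at h0
    omega
  · exact countP_mem_N'_append_append_le hα hβ

end SGNFPaper
end

section
/- Let G = (N, T, P, S) be a type-0 grammar in Special Geffert Normal Form. Every sentential form derivable from S in G contains at most one occurrence of the substring AB or CD (in total), and if such a substring occurs then the sentential form contains no nonterminal from N'. -/
/-!
Type-0 grammars in Special Geffert Normal Form (SGNF).

Symbols are drawn from the universal symbol set `ℕ`; strings (sentential
forms) are lists of symbols; `λ` is the empty string `[]`.
-/

namespace SGNFPaper

/-- The number of occurrences of `p` as a (contiguous) substring of `w`. -/
def infixCount (p w : Word) : ℕ :=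
  ((List.range w.length).filter
    (fun i => decide ((w.drop i).take p.length = p))).length

/-!
Every sentential form lies in `{A,C}* (N' ∪ {λ}) (T ∪ {B,D})*`. This holds for `S`; a rule
`X → Y₁Y₂` moves the unique `N'`-symbol into one of the two blocks, while `S' → λ`, `AB → λ` and
`CD → λ` can only act at the centre and leave two clean blocks behind. An occurrence of `AB` or
`CD` is a letter of `{A,C}` followed by a letter outside `{A,C}`, so in such a word it has to
straddle the right end of the `{A,C}`-block; hence there is at most one, and only when the centre
is empty.
-/

end SGNFPaper

namespace List

variable {α : Type*}

theorem eq_append_pair_of_append_eq {L : α → Prop} {x y u v : List α} {p q : α}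
    (h : x ++ p :: q :: y = u ++ v) (hu : ∀ a ∈ u, L a) (hv : ∀ a ∈ v, ¬ L a)
    (hp : L p) (hq : ¬ L q) : u = x ++ [p] ∧ v = q :: y := by
  rcases append_eq_append_iff.1 h with ⟨s, rfl, hs⟩ | ⟨s, rfl, rfl⟩
  · match s, hs with
    | [], hs => exact absurd hp (hv p (by rw [nil_append] at hs; simp [← hs]))
    | [a], hs =>
      obtain ⟨rfl, rfl⟩ := cons_eq_cons.1 hs
      exact ⟨rfl, rfl⟩
    | a :: b :: s, hs =>
      obtain ⟨rfl, rfl, -⟩ : p = a ∧ q = b ∧ y = s ++ v := by simpa using hs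
      exact absurd (hu q (by simp)) hq
  · exact absurd hp (hv p (by simp))

theorem eq_of_append_cons_eq_append_cons {x y u v : List α} {a b : α}
    (h : x ++ a :: y = u ++ b :: v) (hu : a ∉ u) (hv : a ∉ v) :
    x = u ∧ a = b ∧ y = v := by
  rcases append_eq_append_iff.1 h with ⟨s, rfl, hs⟩ | ⟨s, rfl, hs⟩
  · cases s with
    | nil => simp_all
    | cons c s =>
      obtain ⟨rfl, -⟩ := cons_eq_cons.1 hs
      simp at hu
  · cases s with
    | nil => simp_all
    | cons c s =>
      obtain ⟨-, rfl⟩ := cons_eq_cons.1 hs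
      simp at hv

theorem exists_eq_append_pair_of_take_drop_eq {w : List α} {i : ℕ} {p q : α}
    (h : (w.drop i).take 2 = [p, q]) :
    ∃ x y, w = x ++ p :: q :: y ∧ x.length = i := by
  have hi : i < w.length := by
    by_contra! hi
    simp [drop_eq_nil_of_le hi] at h
  refine ⟨w.take i, (w.drop i).drop 2, ?_, by simp [hi.le]⟩
  conv_lhs => rw [← take_append_drop i w, ← take_append_drop 2 (w.drop i), h]
  rfl

end List

namespace SGNFPaper

theorem exists_take_drop_eq_of_infixCount_pos {p w : Word} (h : 0 < infixCount p w) :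
    ∃ i, (w.drop i).take p.length = p := by
  obtain ⟨i, -, hi⟩ := List.length_filter_pos_iff.1 h
  exact ⟨i, of_decide_eq_true hi⟩

theorem infixCount_le_one_of_forall_eq {p w : Word} {k : ℕ}
    (h : ∀ i, (w.drop i).take p.length = p → i = k) : infixCount p w ≤ 1 := by
  have hsub : (List.range w.length).filter
      (fun i => decide ((w.drop i).take p.length = p)) ⊆ [k] := fun i hi =>
    List.mem_singleton.2 (h i (of_decide_eq_true (List.mem_filter.1 hi).2))
  exact ((List.nodup_range.filter _).subperm hsub).length_le

theorem infixCount_add_infixCount_le_one {p q w : Word} {k : ℕ}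
    (hlen : p.length = q.length) (hpq : p ≠ q)
    (hp : ∀ i, (w.drop i).take p.length = p → i = k)
    (hq : ∀ i, (w.drop i).take q.length = q → i = k) :
    infixCount p w + infixCount q w ≤ 1 := by
  have hp₁ := infixCount_le_one_of_forall_eq hp
  have hq₁ := infixCount_le_one_of_forall_eq hq
  by_contra! hlt
  obtain ⟨i, hi⟩ := exists_take_drop_eq_of_infixCount_pos (p := p) (w := w) (by omega)
  obtain ⟨j, hj⟩ := exists_take_drop_eq_of_infixCount_pos (p := q) (w := w) (by omega)
  obtain rfl := (hp i hi).trans (hq j hj).symm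
  exact hpq (hi.symm.trans (hlen ▸ hj))

namespace Grammar

variable (G : Grammar)

def IsLeft (c : ℕ) : Prop := c = G.A ∨ c = G.C

def IsRight (c : ℕ) : Prop := c ∈ G.T ∨ c = G.B ∨ c = G.D

variable {G}

theorem IsLeft.notMem_N' {c : ℕ} (hc : G.IsLeft c) : c ∉ G.N' := by
  rcases hc with rfl | rfl
  exacts [G.ABCD_not_N'.1, G.ABCD_not_N'.2.2.1]

theorem IsRight.notMem_N' {c : ℕ} (hc : G.IsRight c) : c ∉ G.N' := by
  rcases hc with hc | rfl | rfl
  · exact fun hN => G.N_T_disjoint c (Finset.mem_union_left _ hN) hc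
  exacts [G.ABCD_not_N'.2.1, G.ABCD_not_N'.2.2.2]

theorem IsRight.not_isLeft {c : ℕ} (hc : G.IsRight c) : ¬ G.IsLeft c := by
  obtain ⟨hAB, hAC, hAD, hBC, hBD, hCD⟩ := G.ABCD_distinct
  rintro (rfl | rfl)
  · rcases hc with hc | h | h
    exacts [G.N_T_disjoint _ (by simp) hc, hAB h, hAD h]
  · rcases hc with hc | h | h
    exacts [G.N_T_disjoint _ (by simp) hc, hBC h.symm, hCD h]

variable (G) in
structure IsCenterSplit (u m v : Word) : Prop where
  left : ∀ c ∈ u, G.IsLeft c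
  center : m = [] ∨ ∃ X ∈ G.N', m = [X]
  right : ∀ c ∈ v, G.IsRight c

variable (G) in
def IsCentered (w : Word) : Prop := ∃ u m v, w = u ++ m ++ v ∧ G.IsCenterSplit u m v

theorem isCentered_append {x y : Word} (hx : ∀ c ∈ x, G.IsLeft c) (hy : ∀ c ∈ y, G.IsRight c) :
    G.IsCentered (x ++ y) :=
  ⟨x, [], y, by simp, hx, .inl rfl, hy⟩

theorem isCentered_append_cons {x y : Word} {X : ℕ} (hx : ∀ c ∈ x, G.IsLeft c) (hX : X ∈ G.N')
    (hy : ∀ c ∈ y, G.IsRight c) : G.IsCentered (x ++ X :: y) :=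
  ⟨x, [X], y, by simp, hx, .inr ⟨X, hX, rfl⟩, hy⟩

namespace IsCenterSplit

variable {u m v : Word}

theorem not_isLeft_of_mem (hs : G.IsCenterSplit u m v) {c : ℕ} (hc : c ∈ m ++ v) :
    ¬ G.IsLeft c := by
  rcases List.mem_append.1 hc with hc | hc
  · obtain rfl | ⟨X, hX, rfl⟩ := hs.center
    · simp at hc
    · exact fun hl => hl.notMem_N' (List.mem_singleton.1 hc ▸ hX)
  · exact (hs.right c hc).not_isLeft

theorem eq_of_eq_append_pair (hs : G.IsCenterSplit u m v) {x y : Word} {p q : ℕ}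
    (h : u ++ m ++ v = x ++ [p, q] ++ y) (hp : G.IsLeft p) (hq : G.IsRight q) :
    u = x ++ [p] ∧ m = [] ∧ v = q :: y := by
  rw [List.append_assoc, eq_comm, List.append_assoc] at h
  obtain ⟨rfl, hmv⟩ := List.eq_append_pair_of_append_eq h hs.left
    (fun c hc => hs.not_isLeft_of_mem hc) hp hq.not_isLeft
  obtain rfl | ⟨X, hX, rfl⟩ := hs.center
  · exact ⟨rfl, rfl, hmv⟩
  · obtain ⟨rfl, -⟩ := List.cons_eq_cons.1 hmv
    exact absurd hX hq.notMem_N'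

theorem eq_of_eq_append_singleton (hs : G.IsCenterSplit u m v) {x y : Word} {X : ℕ}
    (h : u ++ m ++ v = x ++ [X] ++ y) (hX : X ∈ G.N') : x = u ∧ y = v := by
  have hu : X ∉ u := fun hX' => (hs.left X hX').notMem_N' hX
  have hv : X ∉ v := fun hX' => (hs.right X hX').notMem_N' hX
  obtain rfl | ⟨X', -, rfl⟩ := hs.center
  · rw [List.append_nil] at h
    exact ((List.mem_append.1 (h ▸ by simp : X ∈ u ++ v)).elim hu hv).elim
  · simp only [List.append_assoc, List.singleton_append] at h
    obtain ⟨rfl, -, rfl⟩ := List.eq_of_append_cons_eq_append_cons h.symm hu hv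
    exact ⟨rfl, rfl⟩

theorem eq_nil_and_succ_eq_length_of_take_drop_eq (hs : G.IsCenterSplit u m v) {i p q : ℕ}
    (h : ((u ++ m ++ v).drop i).take 2 = [p, q]) (hp : G.IsLeft p) (hq : G.IsRight q) :
    m = [] ∧ i + 1 = u.length := by
  obtain ⟨x, y, hxy, rfl⟩ := List.exists_eq_append_pair_of_take_drop_eq h
  obtain ⟨rfl, rfl, -⟩ := hs.eq_of_eq_append_pair (by simpa using hxy) hp hq
  simp

theorem notMem_N' (hs : G.IsCenterSplit u m v) (hm : m = []) {a : ℕ} (ha : a ∈ u ++ m ++ v) :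
    a ∉ G.N' := by
  subst hm
  rcases List.mem_append.1 (by simpa using ha) with ha | ha
  exacts [(hs.left a ha).notMem_N', (hs.right a ha).notMem_N']

end IsCenterSplit

theorem IsCentered.of_produces {w w' : Word} (hw : G.IsCentered w) (hp : Produces G w w') :
    G.IsCentered w' := by
  obtain ⟨u, m, v, rfl, hs⟩ := hw
  obtain ⟨r, hr, x, y, h, rfl⟩ := hp
  have of_pair {p q : ℕ} (h : u ++ m ++ v = x ++ [p, q] ++ y) (hp : G.IsLeft p)
      (hq : G.IsRight q) : G.IsCentered (x ++ [] ++ y) := by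
    obtain ⟨rfl, -, rfl⟩ := hs.eq_of_eq_append_pair h hp hq
    simpa using isCentered_append (fun c hc => hs.left c (by simp [hc]))
      (fun c hc => hs.right c (by simp [hc]))
  rcases G.rules_form r hr with rfl | rfl | rfl | ⟨X, Y₁, Y₂, rfl, hX, -, hY⟩
  · exact of_pair h (.inl rfl) (.inr (.inl rfl))
  · exact of_pair h (.inr rfl) (.inr (.inr rfl))
  · obtain ⟨rfl, rfl⟩ := hs.eq_of_eq_append_singleton h G.S'_mem
    simpa using isCentered_append hs.left hs.right
  · obtain ⟨rfl, rfl⟩ := hs.eq_of_eq_append_singleton h hX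
    rcases hY with ⟨hY₁, -, hY₂⟩ | ⟨hY₁, hY₂, -⟩
    · simpa using isCentered_append_cons hs.left hY₁ (y := Y₂ :: y)
        (List.forall_mem_cons.2 ⟨hY₂, hs.right⟩)
    · have hx : ∀ c ∈ x ++ [Y₁], G.IsLeft c := fun c hc =>
        (List.mem_append.1 hc).elim (hs.left c) (fun hc => List.mem_singleton.1 hc ▸ hY₁)
      simpa using isCentered_append_cons hx hY₂ hs.right

theorem isCentered_of_derives {w : Word} (h : Derives G [G.S] w) : G.IsCentered w := by
  induction h with
  | refl => simpa using isCentered_append_cons (x := []) (y := []) (by simp) G.S_mem (by simp)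
  | tail _ hp ih => exact ih.of_produces hp

end Grammar

/-- Every sentential form derivable from `S` in a grammar in Special Geffert
Normal Form contains at most one occurrence of the substring `AB` or `CD`
(in total), and if such a substring occurs then the sentential form contains
no nonterminal from `N'`. -/
theorem center_substring_unique (G : Grammar) (w : Word)
    (h : Derives G [G.S] w) :
    infixCount [G.A, G.B] w + infixCount [G.C, G.D] w ≤ 1 ∧
    (1 ≤ infixCount [G.A, G.B] w + infixCount [G.C, G.D] w →
      ∀ a ∈ w, a ∉ G.N') := by
  obtain ⟨u, m, v, rfl, hs⟩ := G.isCentered_of_derives h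
  have hAB (i : ℕ) (hi : ((u ++ m ++ v).drop i).take 2 = [G.A, G.B]) :=
    hs.eq_nil_and_succ_eq_length_of_take_drop_eq hi (.inl rfl) (.inr (.inl rfl))
  have hCD (i : ℕ) (hi : ((u ++ m ++ v).drop i).take 2 = [G.C, G.D]) :=
    hs.eq_nil_and_succ_eq_length_of_take_drop_eq hi (.inr rfl) (.inr (.inr rfl))
  refine ⟨infixCount_add_infixCount_le_one (k := u.length - 1) rfl
    (fun hAC => G.ABCD_distinct.2.1 (List.cons.inj hAC).1)
    (fun i hi => by have := (hAB i hi).2; omega) (fun i hi => by have := (hCD i hi).2; omega),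
    fun hsum _ => hs.notMem_N' ?_⟩
  rcases Nat.eq_zero_or_pos (infixCount [G.A, G.B] (u ++ m ++ v)) with h0 | hpos
  · obtain ⟨i, hi⟩ := exists_take_drop_eq_of_infixCount_pos (p := [G.C, G.D]) (w := u ++ m ++ v)
      (by omega)
    exact (hCD i hi).1
  · obtain ⟨i, hi⟩ := exists_take_drop_eq_of_infixCount_pos hpos
    exact (hAB i hi).1

end SGNFPaper
end
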